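/- arXiv:1901.03620 — 2 statements merged into one kernel-verified Lean document; each statement's English description precedes it below -/
import Mathlib

section
/- Fix a cell index l and an active user k ∈ A_l, and let all square-root powers ρ_{i,t}, ρ̂_{i,t} be nonnegative. Set u* = u^opt_{l,k}(ρ̂,ρ) and e* = e_{l,k}(u*, ρ̂, ρ). Then e* > 0, and the function w ↦ w·e* − ln w on (0,∞) attains its unique global minimum at w = 1/e* = 1 + SINR_{l,k}(ρ̂,ρ), with minimum value 1 − ln(1 + SINR_{l,k}(ρ̂,ρ)). -/
open Finset Filter

noncomputable section

/-- `Pset A k` : the set of cells in which user index `k` is active,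
i.e. `P_k = {i : k ∈ A_i}`. -/
def Pset {L K : ℕ} (A : Fin L → Finset (Fin K)) (k : Fin K) : Finset (Fin L) :=
  Finset.univ.filter fun i => k ∈ A i

/-- The SINR denominator `D_{l,k}` for pilot powers `phat` and data powers `p`. -/
def Dterm {L K : ℕ} (M : ℕ) (σ2 : ℝ) (A : Fin L → Finset (Fin K))
    (β : Fin L → Fin K → Fin L → ℝ) (phat p : Fin L → Fin K → ℝ)
    (l : Fin L) (k : Fin K) : ℝ :=
  (M : ℝ) * (K : ℝ) * ∑ i ∈ (Pset A k).erase l, p i k * phat i k * β i k l ^ 2 +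
    ((K : ℝ) * ∑ i ∈ Pset A k, phat i k * β i k l + σ2) *
      ((∑ i, ∑ t ∈ A i, p i t * β i t l) + σ2)

/-- `SINR_{l,k}` for pilot powers `phat` and data powers `p`. -/
def SINR {L K : ℕ} (M : ℕ) (σ2 : ℝ) (A : Fin L → Finset (Fin K))
    (β : Fin L → Fin K → Fin L → ℝ) (phat p : Fin L → Fin K → ℝ)
    (l : Fin L) (k : Fin K) : ℝ :=
  (M : ℝ) * (K : ℝ) * p l k * phat l k * β l k l ^ 2 / Dterm M σ2 A β phat p l k

/-- `SINR_{l,k}(ρ̂, ρ)` : the SINR evaluated at squared square-root powers. -/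
def SINRsq {L K : ℕ} (M : ℕ) (σ2 : ℝ) (A : Fin L → Finset (Fin K))
    (β : Fin L → Fin K → Fin L → ℝ) (rhat rho : Fin L → Fin K → ℝ)
    (l : Fin L) (k : Fin K) : ℝ :=
  SINR M σ2 A β (fun i t => rhat i t ^ 2) (fun i t => rho i t ^ 2) l k

/-- The mean square error `e_{l,k}(u, ρ̂, ρ)`. -/
def eMSE {L K : ℕ} (M : ℕ) (σ2 : ℝ) (A : Fin L → Finset (Fin K))
    (β : Fin L → Fin K → Fin L → ℝ) (u : ℝ) (rhat rho : Fin L → Fin K → ℝ)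
    (l : Fin L) (k : Fin K) : ℝ :=
  (M : ℝ) * (K : ℝ) * u ^ 2 * ∑ i ∈ Pset A k, rho i k ^ 2 * rhat i k ^ 2 * β i k l ^ 2
    - 2 * Real.sqrt ((M : ℝ) * (K : ℝ)) * rho l k * rhat l k * u * β l k l
    + u ^ 2 * ((K : ℝ) * ∑ i ∈ Pset A k, rhat i k ^ 2 * β i k l + σ2) *
        ((∑ i, ∑ t ∈ A i, rho i t ^ 2 * β i t l) + σ2)
    + 1

/-- The leading (quadratic in `u`) coefficient `A_{l,k}(ρ̂, ρ)` of `e_{l,k}`. -/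
def Acoef {L K : ℕ} (M : ℕ) (σ2 : ℝ) (A : Fin L → Finset (Fin K))
    (β : Fin L → Fin K → Fin L → ℝ) (rhat rho : Fin L → Fin K → ℝ)
    (l : Fin L) (k : Fin K) : ℝ :=
  (M : ℝ) * (K : ℝ) * ∑ i ∈ Pset A k, rho i k ^ 2 * rhat i k ^ 2 * β i k l ^ 2 +
    ((K : ℝ) * ∑ i ∈ Pset A k, rhat i k ^ 2 * β i k l + σ2) *
      ((∑ i, ∑ t ∈ A i, rho i t ^ 2 * β i t l) + σ2)

/-- The optimal beamforming coefficient `u^opt_{l,k}(ρ̂, ρ)`. -/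
def uopt {L K : ℕ} (M : ℕ) (σ2 : ℝ) (A : Fin L → Finset (Fin K))
    (β : Fin L → Fin K → Fin L → ℝ) (rhat rho : Fin L → Fin K → ℝ)
    (l : Fin L) (k : Fin K) : ℝ :=
  Real.sqrt ((M : ℝ) * (K : ℝ)) * rho l k * rhat l k * β l k l /
    Acoef M σ2 A β rhat rho l k

/-- The weighted-MMSE objective `F(u, w, ρ̂, ρ)`. -/
def Fobj {L K : ℕ} (M : ℕ) (σ2 : ℝ) (A : Fin L → Finset (Fin K))
    (β : Fin L → Fin K → Fin L → ℝ) (u w rhat rho : Fin L → Fin K → ℝ) : ℝ :=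
  ∑ l, ∑ k ∈ A l, (w l k * eMSE M σ2 A β (u l k) rhat rho l k - Real.log (w l k))

/-- The pilot-power quadratic coefficient `η̂_{l,k}(u, w, ρ)`. -/
def etaHat {L K : ℕ} (M : ℕ) (σ2 : ℝ) (A : Fin L → Finset (Fin K))
    (β : Fin L → Fin K → Fin L → ℝ) (u w rho : Fin L → Fin K → ℝ)
    (l : Fin L) (k : Fin K) : ℝ :=
  rho l k ^ 2 * (M : ℝ) * (K : ℝ) * ∑ i ∈ Pset A k, w i k * u i k ^ 2 * β l k i ^ 2 +
    (K : ℝ) * ∑ j ∈ Pset A k, w j k * u j k ^ 2 * β l k j *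
      ((∑ i, ∑ t ∈ A i, rho i t ^ 2 * β i t j) + σ2)

/-- The data-power quadratic coefficient `η_{l,k}(u, w, ρ̂)`. -/
def etaData {L K : ℕ} (M : ℕ) (σ2 : ℝ) (A : Fin L → Finset (Fin K))
    (β : Fin L → Fin K → Fin L → ℝ) (u w rhat : Fin L → Fin K → ℝ)
    (l : Fin L) (k : Fin K) : ℝ :=
  rhat l k ^ 2 * (M : ℝ) * (K : ℝ) * ∑ i ∈ Pset A k, w i k * u i k ^ 2 * β l k i ^ 2 +
    ∑ i, ∑ t ∈ A i, w i t * u i t ^ 2 * β l k i *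
      ((K : ℝ) * ∑ j ∈ Pset A t, rhat j t ^ 2 * β j t i + σ2)

/-! As a function of `u`, `e_{l,k}` is the quadratic `A u² - 2 c u + 1` with
`c = √(MK) ρ_{l,k} ρ̂_{l,k} β_{l,k}^l`. Splitting the `i = l` term off the first sum of `A` gives
`A = D + c²`, so at the vertex `u^opt = c / A` the error is `1 - c² / A = D / A`, whose
reciprocal is `1 + c² / D = 1 + SINR`. The minimisation in `w` is the strict inequality
`log x < x - 1` for `x = w e* ≠ 1`. -/

theorem quadratic_at_vertex {a c : ℝ} (ha : a ≠ 0) :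
    a * (c / a) ^ 2 - 2 * c * (c / a) + 1 = 1 - c ^ 2 / a := by
  field_simp
  ring

theorem one_add_log_lt_mul_sub_log {e w : ℝ} (he : 0 < e) (hw : 0 < w) (hne : w ≠ e⁻¹) :
    1 + Real.log e < w * e - Real.log w := by
  have hwe : w * e ≠ 1 := fun h => hne (eq_inv_of_mul_eq_one_left h)
  have := Real.log_lt_sub_one_of_pos (mul_pos hw he) hwe
  rw [Real.log_mul hw.ne' he.ne'] at this
  linarith

section

variable {L K : ℕ} (M : ℕ) (σ2 : ℝ) (A : Fin L → Finset (Fin K))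
  (β : Fin L → Fin K → Fin L → ℝ) (rhat rho : Fin L → Fin K → ℝ) (l : Fin L) (k : Fin K)

theorem mem_Pset_of_mem (hk : k ∈ A l) : l ∈ Pset A k := by
  simp [Pset, hk]

theorem Dterm_pos {phat p : Fin L → Fin K → ℝ} (hσ : 0 < σ2) (hβ : ∀ i t l, 0 ≤ β i t l)
    (hphat : ∀ i t, 0 ≤ phat i t) (hp : ∀ i t, 0 ≤ p i t) :
    0 < Dterm M σ2 A β phat p l k := by
  have hinterf : 0 ≤ ∑ i ∈ (Pset A k).erase l, p i k * phat i k * β i k l ^ 2 :=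
    sum_nonneg fun i _ => mul_nonneg (mul_nonneg (hp i k) (hphat i k)) (sq_nonneg _)
  have hpilot : 0 ≤ ∑ i ∈ Pset A k, phat i k * β i k l :=
    sum_nonneg fun i _ => mul_nonneg (hphat i k) (hβ i k l)
  have hdata : 0 ≤ ∑ i, ∑ t ∈ A i, p i t * β i t l :=
    sum_nonneg fun i _ => sum_nonneg fun t _ => mul_nonneg (hp i t) (hβ i t l)
  unfold Dterm
  positivity

theorem Dterm_sq_pos (hσ : 0 < σ2) (hβ : ∀ i t l, 0 ≤ β i t l) :
    0 < Dterm M σ2 A β (fun i t => rhat i t ^ 2) (fun i t => rho i t ^ 2) l k :=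
  Dterm_pos M σ2 A β l k hσ hβ (fun _ _ => sq_nonneg _) (fun _ _ => sq_nonneg _)

theorem eMSE_eq_quadratic (u : ℝ) :
    eMSE M σ2 A β u rhat rho l k = Acoef M σ2 A β rhat rho l k * u ^ 2
      - 2 * (√((M : ℝ) * K) * rho l k * rhat l k * β l k l) * u + 1 := by
  unfold eMSE Acoef
  ring

theorem Acoef_eq_Dterm_add (hk : k ∈ A l) :
    Acoef M σ2 A β rhat rho l k =
      Dterm M σ2 A β (fun i t => rhat i t ^ 2) (fun i t => rho i t ^ 2) l k
        + (M : ℝ) * K * rho l k ^ 2 * rhat l k ^ 2 * β l k l ^ 2 := by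
  unfold Acoef Dterm
  rw [← add_sum_erase _ _ (mem_Pset_of_mem A l k hk)]
  ring

theorem sq_signal_amplitude :
    (√((M : ℝ) * K) * rho l k * rhat l k * β l k l) ^ 2
      = (M : ℝ) * K * rho l k ^ 2 * rhat l k ^ 2 * β l k l ^ 2 := by
  rw [mul_pow, mul_pow, mul_pow, Real.sq_sqrt (by positivity)]

theorem Acoef_pos (hσ : 0 < σ2) (hβ : ∀ i t l, 0 ≤ β i t l) (hk : k ∈ A l) :
    0 < Acoef M σ2 A β rhat rho l k := by
  have hD := Dterm_sq_pos M σ2 A β rhat rho l k hσ hβ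
  rw [Acoef_eq_Dterm_add M σ2 A β rhat rho l k hk]
  positivity

theorem eMSE_uopt (hσ : 0 < σ2) (hβ : ∀ i t l, 0 ≤ β i t l) (hk : k ∈ A l) :
    eMSE M σ2 A β (uopt M σ2 A β rhat rho l k) rhat rho l k =
      Dterm M σ2 A β (fun i t => rhat i t ^ 2) (fun i t => rho i t ^ 2) l k
        / Acoef M σ2 A β rhat rho l k := by
  have hA := Acoef_eq_Dterm_add M σ2 A β rhat rho l k hk
  have hApos := Acoef_pos M σ2 A β rhat rho l k hσ hβ hk
  rw [eMSE_eq_quadratic, uopt, quadratic_at_vertex hApos.ne', sq_signal_amplitude]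
  field_simp
  linarith

theorem inv_eMSE_uopt (hσ : 0 < σ2) (hβ : ∀ i t l, 0 ≤ β i t l) (hk : k ∈ A l) :
    (eMSE M σ2 A β (uopt M σ2 A β rhat rho l k) rhat rho l k)⁻¹ =
      1 + SINRsq M σ2 A β rhat rho l k := by
  have hD := Dterm_sq_pos M σ2 A β rhat rho l k hσ hβ
  rw [eMSE_uopt M σ2 A β rhat rho l k hσ hβ hk, inv_div,
    Acoef_eq_Dterm_add M σ2 A β rhat rho l k hk, SINRsq, SINR]
  field_simp

end

theorem stmt3_general {L K : ℕ} (M : ℕ)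
    (σ2 : ℝ) (hσ : 0 < σ2)
    (A : Fin L → Finset (Fin K))
    (β : Fin L → Fin K → Fin L → ℝ) (hβ : ∀ i t l, 0 ≤ β i t l)
    (rhat rho : Fin L → Fin K → ℝ)
    (l : Fin L) (k : Fin K) (hk : k ∈ A l) :
    let estar := eMSE M σ2 A β (uopt M σ2 A β rhat rho l k) rhat rho l k
    0 < estar ∧
    1 / estar = 1 + SINRsq M σ2 A β rhat rho l k ∧
    (∀ w : ℝ, 0 < w → w ≠ 1 / estar →
      (1 / estar) * estar - Real.log (1 / estar) < w * estar - Real.log w) ∧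
    (1 / estar) * estar - Real.log (1 / estar) =
      1 - Real.log (1 + SINRsq M σ2 A β rhat rho l k) := by
  intro estar
  have hinv : estar⁻¹ = 1 + SINRsq M σ2 A β rhat rho l k :=
    inv_eMSE_uopt M σ2 A β rhat rho l k hσ hβ hk
  have hpos : 0 < estar := by
    rw [show estar = _ from eMSE_uopt M σ2 A β rhat rho l k hσ hβ hk]
    exact div_pos (Dterm_sq_pos M σ2 A β rhat rho l k hσ hβ)
      (Acoef_pos M σ2 A β rhat rho l k hσ hβ hk)
  have hmin : (1 / estar) * estar - Real.log (1 / estar) = 1 + Real.log estar := by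
    rw [one_div_mul_cancel hpos.ne', one_div, Real.log_inv, sub_neg_eq_add]
  refine ⟨hpos, one_div estar ▸ hinv, fun w hw hne => ?_, ?_⟩
  · rw [hmin]
    exact one_add_log_lt_mul_sub_log hpos hw (one_div estar ▸ hne)
  · rw [hmin, ← hinv, Real.log_inv]
    ring

/-- With `u* = u^opt_{l,k}(ρ̂,ρ)` and `e* = e_{l,k}(u*, ρ̂, ρ)`, we have
`e* > 0`, and `w ↦ w e* − ln w` on `(0,∞)` attains its unique global minimum at
`w = 1/e* = 1 + SINR_{l,k}(ρ̂,ρ)`, with minimum value `1 − ln(1 + SINR_{l,k}(ρ̂,ρ))`. -/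
theorem stmt3 {L K : ℕ} (M : ℕ) (hL : 0 < L) (hK : 0 < K) (hM : 0 < M)
    (σ2 : ℝ) (hσ : 0 < σ2)
    (A : Fin L → Finset (Fin K))
    (β : Fin L → Fin K → Fin L → ℝ) (hβ : ∀ i t l, 0 ≤ β i t l)
    (rhat rho : Fin L → Fin K → ℝ)
    (hrhat : ∀ i t, 0 ≤ rhat i t) (hrho : ∀ i t, 0 ≤ rho i t)
    (l : Fin L) (k : Fin K) (hk : k ∈ A l) :
    let estar := eMSE M σ2 A β (uopt M σ2 A β rhat rho l k) rhat rho l k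
    0 < estar ∧
    1 / estar = 1 + SINRsq M σ2 A β rhat rho l k ∧
    (∀ w : ℝ, 0 < w → w ≠ 1 / estar →
      (1 / estar) * estar - Real.log (1 / estar) < w * estar - Real.log w) ∧
    (1 / estar) * estar - Real.log (1 / estar) =
      1 - Real.log (1 + SINRsq M σ2 A β rhat rho l k) :=
  stmt3_general M σ2 hσ A β hβ rhat rho l k hk
end
end

section
/- (Stationarity equivalence, eq. (46) of Appendix B.) Let all square-root powers ρ⁰ = (ρ⁰_{i,t}), ρ̂⁰ = (ρ̂⁰_{i,t}) be nonnegative, and define u*_{l,k} = u^opt_{l,k}(ρ̂⁰, ρ⁰) and w*_{l,k} = 1 + SINR_{l,k}(ρ̂⁰, ρ⁰) for all l, k ∈ A_l. Fix a pair (i,t) with t ∈ A_i, and define the real functions g(x) = Σ_{l=1}^L Σ_{k∈A_l} w*_{l,k} e_{l,k}(u*_{l,k}, ρ̂⁰, ρ^x) and h(x) = Σ_{l=1}^L Σ_{k∈A_l} ln(1 + SINR_{l,k}(ρ̂⁰, ρ^x)), where ρ^x agrees with ρ⁰ in every coordinate except that the (i,t) coordinate is replaced by x. Then g and h are differentiable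 at x = ρ⁰_{i,t} and g′(ρ⁰_{i,t}) = −h′(ρ⁰_{i,t}). Hence the weighted-MMSE objective, with u and w fixed at their per-point optimal values, has the same first-order variation in the data square-root powers as the negative sum of ln(1 + SINR). -/
open Finset Filter

noncomputable section

/-!
For fixed `x`, `e_{l,k}(u, ρ̂⁰, ρ^x) = A u² − 2 b u + 1` with `b = √(MK) ρ_{l,k} ρ̂_{l,k} β_{l,k}^l`
and `A = D_{l,k} + b²`. It is minimised at `u = b / A = u^opt_{l,k}`, with minimum
`D / A = 1 / (1 + SINR_{l,k})`. By the envelope theorem, at `x = ρ⁰_{i,t}` the derivative of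
`e_{l,k}(u*_{l,k}, ·)` is that of `1 / (1 + SINR_{l,k})`, and multiplying by
`w*_{l,k} = 1 + SINR_{l,k}` turns it into minus the derivative of `ln (1 + SINR_{l,k})`.
-/

theorem exists_hasDerivAt_mse_at_argmin_and_neg_log_one_add {D b : ℝ → ℝ} {x₀ : ℝ}
    (hD : DifferentiableAt ℝ D x₀) (hb : DifferentiableAt ℝ b x₀) (hD₀ : 0 < D x₀) :
    let u := b x₀ / (D x₀ + b x₀ ^ 2)
    ∃ d : ℝ,
      HasDerivAt (fun x => (1 + b x₀ ^ 2 / D x₀) * ((D x + b x ^ 2) * u ^ 2 - 2 * b x * u + 1))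
        d x₀ ∧
      HasDerivAt (fun x => Real.log (1 + b x ^ 2 / D x)) (-d) x₀ := by
  intro u
  have hw₀ : 0 < 1 + b x₀ ^ 2 / D x₀ := by positivity
  have hb2 := hb.hasDerivAt.fun_pow 2
  have hmse := ((((hD.hasDerivAt.fun_add hb2).mul_const (u ^ 2)).fun_sub
    ((hb.hasDerivAt.const_mul 2).mul_const u)).add_const 1).const_mul (1 + b x₀ ^ 2 / D x₀)
  have hlog := ((hb2.fun_div hD.hasDerivAt hD₀.ne').const_add 1).log hw₀.ne'
  refine ⟨_, hmse, ?_⟩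
  convert hlog using 1
  simp only [u]
  field_simp
  ring

theorem HasDerivAt.exists_sum_and_neg_sum {ι : Type*} {s : Finset ι} {f g : ι → ℝ → ℝ}
    {x : ℝ}
    (h : ∀ j ∈ s, ∃ d : ℝ, HasDerivAt (f j) d x ∧ HasDerivAt (g j) (-d) x) :
    ∃ d : ℝ, HasDerivAt (fun y => ∑ j ∈ s, f j y) d x ∧
      HasDerivAt (fun y => ∑ j ∈ s, g j y) (-d) x := by
  choose! d hf hg using h
  refine ⟨∑ j ∈ s, d j, HasDerivAt.fun_sum hf, ?_⟩
  rw [← Finset.sum_neg_distrib]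
  exact HasDerivAt.fun_sum hg

section Cell

variable {L K : ℕ} (M : ℕ) (σ2 : ℝ) (A : Fin L → Finset (Fin K))
  (β : Fin L → Fin K → Fin L → ℝ) (rhat : Fin L → Fin K → ℝ)

def DtermSq (rho : Fin L → Fin K → ℝ) (l : Fin L) (k : Fin K) : ℝ :=
  Dterm M σ2 A β (fun i t => rhat i t ^ 2) (fun i t => rho i t ^ 2) l k

def signalAmp (rho : Fin L → Fin K → ℝ) (l : Fin L) (k : Fin K) : ℝ :=
  Real.sqrt ((M : ℝ) * (K : ℝ)) * rho l k * rhat l k * β l k l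

variable {M σ2 A β rhat}

theorem signalAmp_sq (rho : Fin L → Fin K → ℝ) (l : Fin L) (k : Fin K) :
    signalAmp M β rhat rho l k ^ 2 =
      (M : ℝ) * (K : ℝ) * rho l k ^ 2 * rhat l k ^ 2 * β l k l ^ 2 := by
  rw [signalAmp, mul_pow, mul_pow, mul_pow, Real.sq_sqrt (by positivity)]

theorem Acoef_eq_DtermSq_add_signalAmp_sq (rho : Fin L → Fin K → ℝ) {l : Fin L} {k : Fin K}
    (hk : k ∈ A l) :
    Acoef M σ2 A β rhat rho l k =
      DtermSq M σ2 A β rhat rho l k + signalAmp M β rhat rho l k ^ 2 := by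
  have hl : l ∈ Pset A k := by simp [Pset, hk]
  rw [signalAmp_sq, Acoef, DtermSq, Dterm, ← Finset.sum_erase_add _ _ hl]
  ring

theorem uopt_eq (rho : Fin L → Fin K → ℝ) (l : Fin L) (k : Fin K) :
    uopt M σ2 A β rhat rho l k = signalAmp M β rhat rho l k / Acoef M σ2 A β rhat rho l k :=
  rfl

theorem eMSE_eq (u : ℝ) (rho : Fin L → Fin K → ℝ) (l : Fin L) (k : Fin K) :
    eMSE M σ2 A β u rhat rho l k =
      Acoef M σ2 A β rhat rho l k * u ^ 2 - 2 * signalAmp M β rhat rho l k * u + 1 := by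
  rw [eMSE, Acoef, signalAmp]
  ring

theorem SINRsq_eq (rho : Fin L → Fin K → ℝ) (l : Fin L) (k : Fin K) :
    SINRsq M σ2 A β rhat rho l k =
      signalAmp M β rhat rho l k ^ 2 / DtermSq M σ2 A β rhat rho l k := by
  rw [signalAmp_sq, SINRsq, SINR, DtermSq]

theorem DtermSq_pos (hσ : 0 < σ2) (hβ : ∀ i t l, 0 ≤ β i t l)
    (rho : Fin L → Fin K → ℝ) (l : Fin L) (k : Fin K) : 0 < DtermSq M σ2 A β rhat rho l k := by
  have hpilot : 0 ≤ ∑ i ∈ Pset A k, rhat i k ^ 2 * β i k l :=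
    Finset.sum_nonneg fun i _ => mul_nonneg (sq_nonneg _) (hβ i k l)
  have hload : 0 ≤ ∑ i, ∑ t ∈ A i, rho i t ^ 2 * β i t l :=
    Finset.sum_nonneg fun i _ => Finset.sum_nonneg fun t _ => mul_nonneg (sq_nonneg _) (hβ i t l)
  unfold DtermSq Dterm
  positivity

theorem exists_hasDerivAt_weighted_eMSE_and_neg_log_one_add_SINRsq (hσ : 0 < σ2)
    (hβ : ∀ i t l, 0 ≤ β i t l) {rho : ℝ → Fin L → Fin K → ℝ} {x₀ : ℝ}
    (hrho : ∀ i t, DifferentiableAt ℝ (fun x => rho x i t) x₀) {l : Fin L} {k : Fin K}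
    (hk : k ∈ A l) :
    ∃ d : ℝ,
      HasDerivAt (fun x => (1 + SINRsq M σ2 A β rhat (rho x₀) l k) *
        eMSE M σ2 A β (uopt M σ2 A β rhat (rho x₀) l k) rhat (rho x) l k) d x₀ ∧
      HasDerivAt (fun x => Real.log (1 + SINRsq M σ2 A β rhat (rho x) l k)) (-d) x₀ := by
  have hD : DifferentiableAt ℝ (fun x => DtermSq M σ2 A β rhat (rho x) l k) x₀ := by
    unfold DtermSq Dterm
    fun_prop
  have hb : DifferentiableAt ℝ (fun x => signalAmp M β rhat (rho x) l k) x₀ := by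
    unfold signalAmp
    fun_prop
  simpa only [SINRsq_eq, eMSE_eq, uopt_eq, Acoef_eq_DtermSq_add_signalAmp_sq _ hk] using
    exists_hasDerivAt_mse_at_argmin_and_neg_log_one_add hD hb (DtermSq_pos hσ hβ _ l k)

end Cell

theorem stmt14_general {L K : ℕ} (M : ℕ)
    (σ2 : ℝ) (hσ : 0 < σ2)
    (A : Fin L → Finset (Fin K))
    (β : Fin L → Fin K → Fin L → ℝ) (hβ : ∀ i t l, 0 ≤ β i t l)
    (rhat0 rho0 : Fin L → Fin K → ℝ)
    (i : Fin L) (t : Fin K) :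
    let ustar : Fin L → Fin K → ℝ := fun l k => uopt M σ2 A β rhat0 rho0 l k
    let wstar : Fin L → Fin K → ℝ := fun l k => 1 + SINRsq M σ2 A β rhat0 rho0 l k
    let rhoX : ℝ → Fin L → Fin K → ℝ := fun x i' t' =>
      if i' = i ∧ t' = t then x else rho0 i' t'
    let g : ℝ → ℝ := fun x =>
      ∑ l, ∑ k ∈ A l, wstar l k * eMSE M σ2 A β (ustar l k) rhat0 (rhoX x) l k
    let h : ℝ → ℝ := fun x =>
      ∑ l, ∑ k ∈ A l, Real.log (1 + SINRsq M σ2 A β rhat0 (rhoX x) l k)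
    ∃ d : ℝ, HasDerivAt g d (rho0 i t) ∧ HasDerivAt h (-d) (rho0 i t) := by
  intro ustar wstar rhoX g h
  have hbase : rhoX (rho0 i t) = rho0 := by
    funext a b
    simp only [rhoX]
    split_ifs with hab
    · rw [hab.1, hab.2]
    · rfl
  have hcoord : ∀ a b, DifferentiableAt ℝ (fun x => rhoX x a b) (rho0 i t) := by
    intro a b
    simp only [rhoX]
    split_ifs <;> fun_prop
  refine HasDerivAt.exists_sum_and_neg_sum fun l _ =>
    HasDerivAt.exists_sum_and_neg_sum fun k hk => ?_
  have hcell := exists_hasDerivAt_weighted_eMSE_and_neg_log_one_add_SINRsq (M := M)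
    (rhat := rhat0) hσ hβ hcoord hk
  rwa [hbase] at hcell

/-- stationarity equivalence, eq. (46): with `u*` and `w*` fixed at
their per-point optimal values `u*_{l,k} = u^opt_{l,k}(ρ̂⁰,ρ⁰)`,
`w*_{l,k} = 1 + SINR_{l,k}(ρ̂⁰,ρ⁰)`, the weighted-MMSE objective
`g(x) = Σ w*_{l,k} e_{l,k}(u*_{l,k}, ρ̂⁰, ρ^x)` and
`h(x) = Σ ln(1 + SINR_{l,k}(ρ̂⁰, ρ^x))`, where `ρ^x` replaces the `(i,t)` data
square-root power by `x`, are differentiable at `x = ρ⁰_{i,t}` with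
`g′(ρ⁰_{i,t}) = −h′(ρ⁰_{i,t})`. -/
theorem stmt14 {L K : ℕ} (M : ℕ) (hL : 0 < L) (hK : 0 < K) (hM : 0 < M)
    (σ2 : ℝ) (hσ : 0 < σ2)
    (A : Fin L → Finset (Fin K))
    (β : Fin L → Fin K → Fin L → ℝ) (hβ : ∀ i t l, 0 ≤ β i t l)
    (rhat0 rho0 : Fin L → Fin K → ℝ)
    (hrhat0 : ∀ i t, 0 ≤ rhat0 i t) (hrho0 : ∀ i t, 0 ≤ rho0 i t)
    (i : Fin L) (t : Fin K) (ht : t ∈ A i) :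
    let ustar : Fin L → Fin K → ℝ := fun l k => uopt M σ2 A β rhat0 rho0 l k
    let wstar : Fin L → Fin K → ℝ := fun l k => 1 + SINRsq M σ2 A β rhat0 rho0 l k
    let rhoX : ℝ → Fin L → Fin K → ℝ := fun x i' t' =>
      if i' = i ∧ t' = t then x else rho0 i' t'
    let g : ℝ → ℝ := fun x =>
      ∑ l, ∑ k ∈ A l, wstar l k * eMSE M σ2 A β (ustar l k) rhat0 (rhoX x) l k
    let h : ℝ → ℝ := fun x =>
      ∑ l, ∑ k ∈ A l, Real.log (1 + SINRsq M σ2 A β rhat0 (rhoX x) l k)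
    ∃ d : ℝ, HasDerivAt g d (rho0 i t) ∧ HasDerivAt h (-d) (rho0 i t) :=
  stmt14_general M σ2 hσ A β hβ rhat0 rho0 i t
end
end
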